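/- Let n ≥ 3 be an integer and let p be a real number with n/2 < p ≤ (n+1)/2. Let φ : [0, ∞) → [0, 1] be a measurable function such that φ(t) = 1 for all t in some neighbourhood of 1 and φ is supported in a compact subset of (0, ∞). Then there exists a constant C > 0, depending only on n, p and φ, such that for every z ∈ ℂ with z ≠ 0, one has ∫₀^∞ |λ² − z|^{−1} (1 − φ(λ²/|z|)) λ^{−1+n/p} dλ ≤ C |z|^{−1 + n/(2p)}. -/

import Mathlib

open MeasureTheory

/-- Uniform bound for the "elliptic" part of the resolvent multiplier: with a cutoff `φ`
equal to `1` near `1` and compactly supported in `(0, ∞)`, the integral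
`∫₀^∞ |λ² - z|⁻¹ (1 - φ(λ²/|z|)) λ^{-1+n/p} dλ` is bounded by `C |z|^{-1+n/(2p)}`
uniformly over all nonzero complex `z`. -/
theorem stmt_6 (n : ℕ) (hn : 3 ≤ n) (p : ℝ) (hp1 : (n : ℝ) / 2 < p)
    (hp2 : p ≤ ((n : ℝ) + 1) / 2)
    (φ : ℝ → ℝ) (hφmeas : Measurable φ)
    (hφ01 : ∀ t, 0 ≤ t → 0 ≤ φ t ∧ φ t ≤ 1)
    (hφone : ∃ η > (0 : ℝ), ∀ t, |t - 1| < η → φ t = 1)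
    (hφsupp : ∃ K : Set ℝ, IsCompact K ∧ K ⊆ Set.Ioi 0 ∧ ∀ t, 0 ≤ t → t ∉ K → φ t = 0) :
    ∃ C : ℝ, 0 < C ∧ ∀ z : ℂ, z ≠ 0 →
      ∫⁻ l in Set.Ioi (0 : ℝ),
          ENNReal.ofReal ((‖(l : ℂ) ^ 2 - z‖)⁻¹ *
            (1 - φ (l ^ 2 / ‖z‖)) * l ^ (-1 + (n : ℝ) / p))
        ≤ ENNReal.ofReal (C * ‖z‖ ^ (-1 + (n : ℝ) / (2 * p))) := by
  obtain ⟨η, hη, hφη⟩ := hφone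
  have hn3 : (3 : ℝ) ≤ (n : ℝ) := by exact_mod_cast hn
  have hp0 : 0 < p := lt_of_le_of_lt (by linarith) hp1
  set α : ℝ := (n : ℝ) / p with hαdef
  have hα1 : 1 ≤ α := by
    rw [le_div_iff₀ hp0]
    linarith
  have hα0 : 0 < α := lt_of_lt_of_le one_pos hα1
  have hα2 : α < 2 := by
    rw [div_lt_iff₀ hp0]
    linarith
  have h1η : (0 : ℝ) < 1 + η := by linarith
  set C : ℝ := (1 + η) ^ (α / 2) / η * (1 / α + 1 / (2 - α)) with hC
  have hCpos : 0 < C := by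
    apply mul_pos (div_pos (Real.rpow_pos_of_pos h1η _) hη)
    have := sub_pos.mpr hα2
    positivity
  refine ⟨C, hCpos, ?_⟩
  intro z hz
  set r := ‖z‖ with hr
  have hr0 : 0 < r := by
    simpa [hr] using (norm_pos_iff.mpr hz)
  set a := Real.sqrt ((1 + η) * r) with ha
  have ha0 : 0 < a := Real.sqrt_pos.mpr (by positivity)
  have ha2 : a ^ 2 = (1 + η) * r := Real.sq_sqrt (by positivity)
  -- pointwise bounds
  have key1 : ∀ l ∈ Set.Ioc (0 : ℝ) a,
      ENNReal.ofReal ((‖(l : ℂ) ^ 2 - z‖)⁻¹ *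
        (1 - φ (l ^ 2 / r)) * l ^ (-1 + α))
        ≤ ENNReal.ofReal ((η * r)⁻¹ * l ^ (α - 1)) := by
    intro l hl
    apply ENNReal.ofReal_le_ofReal
    have hl0 : 0 < l := hl.1
    have hrpow : (0:ℝ) ≤ l ^ (α - 1) := Real.rpow_nonneg hl0.le _
    have hexp : -1 + α = α - 1 := by ring
    rw [hexp]
    have ht0 : 0 ≤ l ^ 2 / r := by positivity
    obtain ⟨hφ0, hφ1⟩ := hφ01 _ ht0
    by_cases hcase : φ (l ^ 2 / r) = 1
    · rw [hcase]
      simp only [sub_self, mul_zero, zero_mul]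
      positivity
    · have hfar : η ≤ |l ^ 2 / r - 1| := by
        by_contra hcon
        exact hcase (hφη _ (lt_of_not_ge hcon))
      have habs : η * r ≤ ‖(l : ℂ) ^ 2 - z‖ := by
        have h1 : |(l:ℝ) ^ 2 - r| ≤ ‖(l : ℂ) ^ 2 - z‖ := by
          have := abs_norm_sub_norm_le ((l : ℂ) ^ 2) z
          simpa [norm_pow, Complex.norm_real, Real.norm_eq_abs,
            abs_of_pos hl0] using this
        have h2 : η * r ≤ |(l:ℝ) ^ 2 - r| := by
          have hmul : (l ^ 2 / r - 1) * r = l ^ 2 - r := by field_simp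
          have heqabs : |l ^ 2 - r| = |l ^ 2 / r - 1| * r := by
            rw [← hmul, abs_mul, abs_of_pos hr0]
          rw [heqabs]
          exact mul_le_mul_of_nonneg_right hfar hr0.le
        linarith
      have hinv : (‖(l : ℂ) ^ 2 - z‖)⁻¹ ≤ (η * r)⁻¹ := by
        apply inv_anti₀ (by positivity) habs
      calc (‖(l : ℂ) ^ 2 - z‖)⁻¹ * (1 - φ (l ^ 2 / r)) * l ^ (α - 1)
          ≤ (η * r)⁻¹ * 1 * l ^ (α - 1) := by
            apply mul_le_mul_of_nonneg_right _ hrpow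
            apply mul_le_mul hinv (by linarith) (by linarith) (by positivity)
        _ = (η * r)⁻¹ * l ^ (α - 1) := by ring
  have key2 : ∀ l ∈ Set.Ioi a,
      ENNReal.ofReal ((‖(l : ℂ) ^ 2 - z‖)⁻¹ *
        (1 - φ (l ^ 2 / r)) * l ^ (-1 + α))
        ≤ ENNReal.ofReal ((1 + η) / η * l ^ (α - 3)) := by
    intro l hl
    apply ENNReal.ofReal_le_ofReal
    have hl0 : 0 < l := lt_trans ha0 hl
    have hexp : -1 + α = α - 1 := by ring
    rw [hexp]
    have hl2 : (1 + η) * r < l ^ 2 := by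
      rw [← ha2]
      exact pow_lt_pow_left₀ hl ha0.le two_ne_zero
    have ht0 : 0 ≤ l ^ 2 / r := by positivity
    obtain ⟨hφ0, hφ1⟩ := hφ01 _ ht0
    have hlow : η / (1 + η) * l ^ 2 ≤ ‖(l : ℂ) ^ 2 - z‖ := by
      have h1 : (l:ℝ) ^ 2 - r ≤ ‖(l : ℂ) ^ 2 - z‖ := by
        have := abs_norm_sub_norm_le ((l : ℂ) ^ 2) z
        have h2 : |(l:ℝ) ^ 2 - r| ≤ ‖(l : ℂ) ^ 2 - z‖ := by
          simpa [norm_pow, Complex.norm_real, Real.norm_eq_abs,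
            abs_of_pos hl0] using this
        exact le_trans (le_abs_self _) h2
      have h3 : η / (1 + η) * l ^ 2 ≤ l ^ 2 - r := by
        rw [div_mul_eq_mul_div, div_le_iff₀ h1η]
        nlinarith
      linarith
    have hpos2 : (0:ℝ) < η / (1 + η) * l ^ 2 := by positivity
    have hinv : (‖(l : ℂ) ^ 2 - z‖)⁻¹ ≤ (η / (1 + η) * l ^ 2)⁻¹ :=
      inv_anti₀ hpos2 hlow
    have heq : (η / (1 + η) * l ^ 2)⁻¹ * l ^ (α - 1) = (1 + η) / η * l ^ (α - 3) := by
      rw [mul_inv, inv_div]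
      have : ((l : ℝ) ^ 2)⁻¹ * l ^ (α - 1) = l ^ (α - 3) := by
        rw [← Real.rpow_natCast l 2, ← Real.rpow_neg hl0.le,
          ← Real.rpow_add hl0]
        congr 1
        push_cast
        ring
      rw [mul_assoc, this]
    calc (‖(l : ℂ) ^ 2 - z‖)⁻¹ * (1 - φ (l ^ 2 / r)) * l ^ (α - 1)
        ≤ (η / (1 + η) * l ^ 2)⁻¹ * 1 * l ^ (α - 1) := by
          apply mul_le_mul_of_nonneg_right _ (Real.rpow_nonneg hl0.le _)
          apply mul_le_mul hinv (by linarith) (by linarith) (by positivity)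
      _ = (1 + η) / η * l ^ (α - 3) := by rw [mul_one, heq]
  -- split the integral
  have hsplit : Set.Ioi (0:ℝ) = Set.Ioc 0 a ∪ Set.Ioi a :=
    (Set.Ioc_union_Ioi_eq_Ioi ha0.le).symm
  rw [hsplit, lintegral_union measurableSet_Ioi Set.Ioc_disjoint_Ioi_same]
  -- value of the first piece
  have I1 : ∫⁻ l in Set.Ioc (0:ℝ) a, ENNReal.ofReal ((η * r)⁻¹ * l ^ (α - 1))
      = ENNReal.ofReal ((η * r)⁻¹ * (a ^ α / α)) := by
    rw [← ofReal_integral_eq_lintegral_ofReal]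
    · congr 1
      rw [MeasureTheory.integral_const_mul]
      congr 1
      rw [← intervalIntegral.integral_of_le ha0.le,
        integral_rpow (Or.inl (by linarith : (-1:ℝ) < α - 1))]
      rw [sub_add_cancel, Real.zero_rpow hα0.ne']
      ring
    · have : IntervalIntegrable (fun x : ℝ => x ^ (α - 1)) volume 0 a :=
        intervalIntegral.intervalIntegrable_rpow' (by linarith)
      exact ((intervalIntegrable_iff_integrableOn_Ioc_of_le ha0.le).mp this).const_mul _
    · filter_upwards [ae_restrict_mem measurableSet_Ioc] with x hx
      have : (0:ℝ) < x := hx.1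
      positivity
  -- value of the second piece
  have I2 : ∫⁻ l in Set.Ioi a, ENNReal.ofReal ((1 + η) / η * l ^ (α - 3))
      = ENNReal.ofReal ((1 + η) / η * (a ^ (α - 2) / (2 - α))) := by
    rw [← ofReal_integral_eq_lintegral_ofReal]
    · congr 1
      rw [MeasureTheory.integral_const_mul,
        integral_Ioi_rpow_of_lt (by linarith : α - 3 < -1) ha0,
        show α - 3 + 1 = α - 2 by ring]
      congr 1
      rw [show (2:ℝ) - α = -(α - 2) by ring, div_neg, neg_div]
    · exact (integrableOn_Ioi_rpow_of_lt (by linarith) ha0).const_mul _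
    · filter_upwards [ae_restrict_mem measurableSet_Ioi] with x hx
      have : (0:ℝ) < x := lt_trans ha0 hx
      positivity
  have step : (∫⁻ l in Set.Ioc (0:ℝ) a,
        ENNReal.ofReal ((‖(l : ℂ) ^ 2 - z‖)⁻¹ *
          (1 - φ (l ^ 2 / r)) * l ^ (-1 + α))) +
      (∫⁻ l in Set.Ioi a,
        ENNReal.ofReal ((‖(l : ℂ) ^ 2 - z‖)⁻¹ *
          (1 - φ (l ^ 2 / r)) * l ^ (-1 + α)))
      ≤ ENNReal.ofReal ((η * r)⁻¹ * (a ^ α / α)) +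
        ENNReal.ofReal ((1 + η) / η * (a ^ (α - 2) / (2 - α))) := by
    refine add_le_add ?_ ?_
    · rw [← I1]
      exact setLIntegral_mono' measurableSet_Ioc key1
    · rw [← I2]
      exact setLIntegral_mono' measurableSet_Ioi key2
  refine le_trans step ?_
  rw [← ENNReal.ofReal_add (by positivity) (by
    have h2α : (0:ℝ) < 2 - α := by linarith
    have := Real.rpow_nonneg ha0.le (α - 2)
    positivity)]
  apply ENNReal.ofReal_le_ofReal
  -- arithmetic identity
  have hexp2 : -1 + (n : ℝ) / (2 * p) = α / 2 - 1 := by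
    rw [hαdef]; field_simp; ring
  rw [hexp2]
  have haα : ∀ s : ℝ, a ^ s = (1 + η) ^ (s / 2) * r ^ (s / 2) := by
    intro s
    rw [ha, Real.sqrt_eq_rpow, ← Real.rpow_mul (by positivity : (0:ℝ) ≤ (1 + η) * r),
      show 1 / 2 * s = s / 2 by ring, Real.mul_rpow h1η.le hr0.le]
  have e1 := haα α
  have e2 := haα (α - 2)
  have e2' : (α - 2) / 2 = α / 2 - 1 := by ring
  have e3 : (1 + η) ^ (α / 2 - 1) = (1 + η) ^ (α / 2) / (1 + η) := by
    rw [Real.rpow_sub h1η, Real.rpow_one]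
  have e4 : r ^ (α / 2) = r ^ (α / 2 - 1) * r := by
    conv_lhs => rw [show α / 2 = (α / 2 - 1) + 1 by ring]
    rw [Real.rpow_add hr0, Real.rpow_one]
  rw [e2'] at e2
  rw [e1, e2, e3, e4, hC]
  have hαne : α ≠ 0 := hα0.ne'
  have h2αne : (2 : ℝ) - α ≠ 0 := by linarith
  have h1ηne : (1 : ℝ) + η ≠ 0 := h1η.ne'
  apply le_of_eq
  clear_value a C α
  generalize (1 + η) ^ (α / 2) = X
  generalize r ^ (α / 2 - 1) = Y
  field_simp
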